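/- Let (μ_N)_{N≥1} be probability measures, μ_N on Ω_N, having a limit shape l under a scaling (r_N). Then there exists u₁ > 0 such that lim_{N→∞} μ_N{η ∈ Ω_N : q_N(η) < u₁·r_N} = 0; consequently, for every sequence (v_N) of positive reals with v_N/r_N → 0, lim_{N→∞} μ_N{η ∈ Ω_N : q_N(η) ≤ v_N} = 0. -/

import Mathlib

open scoped Classical BigOperators Topology
open Filter MeasureTheory ProbabilityTheory Finset

noncomputable section

/-- `pc η k` is `n_k(η)`, the number of parts of size `k` in the partition `η`. -/
def pc {N : ℕ} (η : Nat.Partition N) (k : ℕ) : ℕ := Multiset.count k η.parts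

/-- `qN η` is the size of the largest part of `η`. -/
def qN {N : ℕ} (η : Nat.Partition N) : ℕ := η.parts.sup

/-- `nuAbove η u = ν(u;η)`, the number of parts of `η` of size `≥ u`. -/
def nuAbove {N : ℕ} (η : Nat.Partition N) (u : ℝ) : ℕ :=
  Multiset.card (η.parts.filter (fun k => u ≤ (k : ℝ)))

/-- probability of the set of partitions satisfying `P` under the mass function `μ`. -/
def prob {N : ℕ} (μ : Nat.Partition N → ℝ) (P : Nat.Partition N → Prop) : ℝ :=
  ∑ η ∈ Finset.univ.filter P, μ η

/-- `μ` is a sequence of probability measures, `μ N` on the partitions of `N` (for `N ≥ 1`). -/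
def IsProbSeq (μ : ∀ N : ℕ, Nat.Partition N → ℝ) : Prop :=
  ∀ N : ℕ, 1 ≤ N → (∀ η : Nat.Partition N, 0 ≤ μ N η) ∧ (∑ η : Nat.Partition N, μ N η) = 1

/-- `l` is the limit shape of the sequence of measures `μ` under the scaling `r`:
`l` is a continuous nonincreasing nonnegative function on `[0,∞)` of total integral `1`,
`r N > 0`, `r N / N → 0`, and for all `0 < a < b`, `ε > 0`, the `μ N`-probability that
`sup_{u ∈ [a,b]} |(r N / N)·ν(r N · u) - l u| < ε` tends to `1`. -/
def HasLimitShape (μ : ∀ N : ℕ, Nat.Partition N → ℝ) (r : ℕ → ℝ) (l : ℝ → ℝ) : Prop :=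
  (∀ N : ℕ, 1 ≤ N → 0 < r N) ∧
  Tendsto (fun N : ℕ => r N / (N : ℝ)) atTop (𝓝 0) ∧
  ContinuousOn l (Set.Ici 0) ∧
  AntitoneOn l (Set.Ici 0) ∧
  (∀ u : ℝ, 0 ≤ u → 0 ≤ l u) ∧
  (∫ u in Set.Ioi (0:ℝ), l u) = 1 ∧
  (∀ a b ε : ℝ, 0 < a → a < b → 0 < ε →
    Tendsto (fun N : ℕ => prob (μ N) (fun η =>
        sSup ((fun u => |r N / (N : ℝ) * (nuAbove η (r N * u) : ℝ) - l u|) '' Set.Icc a b) < ε))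
      atTop (𝓝 1))

/-! Since `∫ l = 1`, some `u₀ > 0` has `l u₀ > 0`. If the largest part of `η` is below
`u₀ r_N`, then `ν(r_N u; η) = 0` for every `u ≥ u₀`, so the rescaled profile of `η` misses `l`
by at least `l u₀` on `[u₀, u₀ + 1]`; by the limit shape property this has vanishing
probability. Any `v_N = o(r_N)` is eventually below `u₀ r_N`. -/

section prob

variable {N : ℕ} {μ : Nat.Partition N → ℝ}

lemma prob_nonneg (hμ : ∀ η, 0 ≤ μ η) (P : Nat.Partition N → Prop) : 0 ≤ prob μ P :=
  Finset.sum_nonneg fun η _ => hμ η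

lemma prob_mono (hμ : ∀ η, 0 ≤ μ η) {P Q : Nat.Partition N → Prop} (h : ∀ η, P η → Q η) :
    prob μ P ≤ prob μ Q :=
  Finset.sum_le_sum_of_subset_of_nonneg (Finset.monotone_filter_right _ fun η _ => h η)
    fun η _ _ => hμ η

lemma prob_not (hμ : ∑ η, μ η = 1) (P : Nat.Partition N → Prop) :
    prob μ (fun η => ¬ P η) = 1 - prob μ P := by
  rw [eq_sub_iff_add_eq, add_comm, prob, prob, Finset.sum_filter_add_sum_filter_not, hμ]

end prob

namespace IsProbSeq

variable {μ : ∀ N : ℕ, Nat.Partition N → ℝ} {P Q : ∀ N : ℕ, Nat.Partition N → Prop}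

lemma tendsto_prob_zero_of_imp (hμ : IsProbSeq μ) (hPQ : ∀ᶠ N in atTop, ∀ η, P N η → Q N η)
    (hQ : Tendsto (fun N => prob (μ N) (Q N)) atTop (𝓝 0)) :
    Tendsto (fun N => prob (μ N) (P N)) atTop (𝓝 0) := by
  refine tendsto_of_tendsto_of_tendsto_of_le_of_le' tendsto_const_nhds hQ ?_ ?_
  · filter_upwards [eventually_ge_atTop 1] with N hN
    exact prob_nonneg (hμ N hN).1 _
  · filter_upwards [eventually_ge_atTop 1, hPQ] with N hN hPQN
    exact prob_mono (hμ N hN).1 hPQN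

lemma tendsto_prob_not (hμ : IsProbSeq μ)
    (hQ : Tendsto (fun N => prob (μ N) (Q N)) atTop (𝓝 1)) :
    Tendsto (fun N => prob (μ N) (fun η => ¬ Q N η)) atTop (𝓝 0) := by
  have hlim : Tendsto (fun N => 1 - prob (μ N) (Q N)) atTop (𝓝 0) := by
    simpa using (tendsto_const_nhds (x := (1 : ℝ))).sub hQ
  refine hlim.congr' ?_
  filter_upwards [eventually_ge_atTop 1] with N hN
  exact (prob_not (hμ N hN).2 _).symm

end IsProbSeq

section largestPart

variable {N : ℕ} {η : Nat.Partition N}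

lemma nuAbove_eq_zero_of_qN_lt {x : ℝ} (h : (qN η : ℝ) < x) : nuAbove η x = 0 := by
  -- the filter runs over the parts cast to `ℝ`
  refine Multiset.card_eq_zero.mpr (Multiset.filter_eq_nil.mpr fun y hy hxy => ?_)
  obtain ⟨k, hk, rfl⟩ : ∃ k ∈ η.parts, (k : ℝ) = y := by simpa using hy
  have hkq : (k : ℝ) ≤ qN η := by exact_mod_cast Multiset.le_sup hk
  linarith

lemma le_sSup_deviation_of_qN_lt {s r a b : ℝ} {l : ℝ → ℝ} (hr : 0 ≤ r) (hab : a ≤ b)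
    (hl : ContinuousOn l (Set.Icc a b)) (hq : (qN η : ℝ) < a * r) :
    l a ≤ sSup ((fun u => |s * (nuAbove η (r * u) : ℝ) - l u|) '' Set.Icc a b) := by
  have hdev : Set.EqOn (fun u => |s * (nuAbove η (r * u) : ℝ) - l u|) (fun u => |l u|)
      (Set.Icc a b) := by
    intro u hu
    have hqu : (qN η : ℝ) < r * u := hq.trans_le (by nlinarith [hu.1])
    simp [nuAbove_eq_zero_of_qN_lt hqu]
  have hbdd := (isCompact_Icc.image_of_continuousOn (hl.abs.congr hdev)).bddAbove
  calc l a ≤ |l a| := le_abs_self _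
    _ = |s * (nuAbove η (r * a) : ℝ) - l a| := (hdev ⟨le_rfl, hab⟩).symm
    _ ≤ _ := le_csSup hbdd (Set.mem_image_of_mem _ ⟨le_rfl, hab⟩)

end largestPart

namespace HasLimitShape

variable {μ : ∀ N : ℕ, Nat.Partition N → ℝ} {r : ℕ → ℝ} {l : ℝ → ℝ}

lemma exists_pos (hls : HasLimitShape μ r l) : ∃ u₀, 0 < u₀ ∧ 0 < l u₀ := by
  obtain ⟨-, -, -, -, hl0, hint, -⟩ := hls
  obtain ⟨u, hu, hlu⟩ := exists_ne_zero_of_setIntegral_ne_zero (hint ▸ one_ne_zero)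
  exact ⟨u, hu, (hl0 u (le_of_lt hu)).lt_of_ne' hlu⟩

lemma tendsto_prob_qN_lt (hls : HasLimitShape μ r l) (hμ : IsProbSeq μ) {u₀ : ℝ}
    (hu₀ : 0 < u₀) (hlu₀ : 0 < l u₀) :
    Tendsto (fun N => prob (μ N) (fun η => (qN η : ℝ) < u₀ * r N)) atTop (𝓝 0) := by
  obtain ⟨hr, -, hlc, -, -, -, hdev⟩ := hls
  refine hμ.tendsto_prob_zero_of_imp ?_
    (hμ.tendsto_prob_not (hdev u₀ (u₀ + 1) (l u₀ / 2) hu₀ (by linarith) (by linarith)))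
  filter_upwards [eventually_ge_atTop 1] with N hN η hq
  have hlc' : ContinuousOn l (Set.Icc u₀ (u₀ + 1)) := hlc.mono fun u hu => hu₀.le.trans hu.1
  exact not_lt.2 ((half_le_self hlu₀.le).trans
    (le_sSup_deviation_of_qN_lt (hr N hN).le (by linarith) hlc' hq))

end HasLimitShape

/-- under a limit shape with scaling `r_N`, the largest part is at least of
order `r_N` with high probability; consequently no sequence `v_N = o(r_N)` can dominate
the largest part with non-vanishing probability. -/
theorem stmt3 (μ : ∀ N : ℕ, Nat.Partition N → ℝ) (hμ : IsProbSeq μ)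
    (r : ℕ → ℝ) (l : ℝ → ℝ) (hls : HasLimitShape μ r l) :
    ∃ u₁ : ℝ, 0 < u₁ ∧
      Tendsto (fun N : ℕ => prob (μ N) (fun η => (qN η : ℝ) < u₁ * r N)) atTop (𝓝 0) ∧
      ∀ v : ℕ → ℝ, (∀ N : ℕ, 0 < v N) →
        Tendsto (fun N : ℕ => v N / r N) atTop (𝓝 0) →
        Tendsto (fun N : ℕ => prob (μ N) (fun η => (qN η : ℝ) ≤ v N)) atTop (𝓝 0) := by
  obtain ⟨u₀, hu₀, hlu₀⟩ := hls.exists_pos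
  have hsmall := hls.tendsto_prob_qN_lt hμ hu₀ hlu₀
  refine ⟨u₀, hu₀, hsmall, fun v _ hv => hμ.tendsto_prob_zero_of_imp ?_ hsmall⟩
  filter_upwards [eventually_ge_atTop 1, hv.eventually (eventually_lt_nhds hu₀)] with N hN hvN η hq
  exact hq.trans_lt (by rwa [div_lt_iff₀ (hls.1 N hN)] at hvN)
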